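/- arXiv:2106.00896 — 3 statements merged into one kernel-verified Lean document; each statement's English description precedes it below -/
import Mathlib

section
/- Suppose Conditions (A1')–(A3') hold (Γ = {F ≤ 0} with F piecewise-smooth convex, coordinates of Γ bounded below by c0 > 0, F smooth on a neighborhood of γ' = g(p0)), p0(i) > 0 for all i, and p0 ∉ Γ. Then there exists η̂ > 0 such that for every q in the η̂-ball B(p0, η̂) around p0 (with q ∉ Γ), the unique minimizer γ̃ = g(q) of γ ↦ Σ_i q(i) log(p0(i)/γ_i) over Γ satisfies F(γ̃) = 0; that is, the optimizer lies on the boundary of the uncertainty set Γ. -/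
noncomputable section

/-- **The optimizer lies on the boundary of the uncertainty set (Lemma `continuity`,
part (iii)).**  Under (A1')--(A3'), with `p0` a strictly positive pmf not in `Γ`,
there is `η̂ > 0` such that for every pmf `q` with `|q i - p0 i| < η̂` for all `i`
(and `q ∉ Γ`), the unique minimizer `γ̃` of `γ ↦ Σ_i q i log (p0 i / γ i)` over `Γ`
satisfies `F γ̃ = 0`. -/
theorem optimizer_on_boundary {d : ℕ} (p0 : Fin d → ℝ) (F : (Fin d → ℝ) → ℝ)
    (Γ : Set (Fin d → ℝ))
    (hp0 : p0 ∈ stdSimplex ℝ (Fin d)) (hp0pos : ∀ i, 0 < p0 i)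
    -- (A1'): Γ is the 0-sublevel set of a (piecewise-smooth) convex function F
    (hFconv : ConvexOn ℝ Set.univ F) (hFcont : Continuous F)
    (hΓ : Γ = {γ ∈ stdSimplex ℝ (Fin d) | F γ ≤ 0})
    (hΓne : Γ.Nonempty) (hp0notin : p0 ∉ Γ)
    -- (A2')
    (c0 : ℝ) (hc0 : 0 < c0) (hΓpos : ∀ γ ∈ Γ, ∀ i, c0 ≤ γ i)
    -- (A3'): F is smooth on a neighborhood of γ' = g(p0)
    (γ' : Fin d → ℝ) (hγ'mem : γ' ∈ Γ)
    (hγ'min : IsMinOn (fun γ => ∑ i, p0 i * Real.log (p0 i / γ i)) Γ γ')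
    (η : ℝ) (hη : 0 < η) (hFsmooth : ContDiffOn ℝ (⊤ : ℕ∞) F (Metric.ball γ' η)) :
    ∃ ηhat > 0, ∀ q ∈ stdSimplex ℝ (Fin d), (∀ i, |q i - p0 i| < ηhat) → q ∉ Γ →
      ∀ γtil, (γtil ∈ Γ ∧ IsMinOn (fun γ => ∑ i, q i * Real.log (p0 i / γ i)) Γ γtil) →
        F γtil = 0 := by
  classical
  have hd : 0 < d := Nat.pos_of_ne_zero (by
    rintro rfl
    have := hp0.2
    simp at this)
  haveI : Nonempty (Fin d) := Fin.pos_iff_nonempty.mp hd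
  refine ⟨Finset.univ.inf' Finset.univ_nonempty p0, ?_, ?_⟩
  · exact (Finset.lt_inf'_iff _).mpr fun i _ => hp0pos i
  rintro q hq hqnear hqΓ γt ⟨hγtΓ, hmin⟩
  have hqpos : ∀ i, 0 < q i := by
    intro i
    have h1 := abs_lt.mp (hqnear i)
    have h2 : Finset.univ.inf' Finset.univ_nonempty p0 ≤ p0 i :=
      Finset.inf'_le _ (Finset.mem_univ i)
    linarith [h1.1]
  have hγtpos : ∀ i, 0 < γt i := fun i => lt_of_lt_of_le hc0 (hΓpos _ hγtΓ i)
  have hΓsub : Γ ⊆ stdSimplex ℝ (Fin d) := by rw [hΓ]; exact fun x hx => hx.1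
  have hγtsimp := hΓsub hγtΓ
  have hsumγ : ∑ i, γt i = 1 := hγtsimp.2
  have hsumq : ∑ i, q i = 1 := hq.2
  by_contra hFne
  have hFle : F γt ≤ 0 := by rw [hΓ] at hγtΓ; exact hγtΓ.2
  have hFlt : F γt < 0 := lt_of_le_of_ne hFle hFne
  have hne : q ≠ γt := fun h => hqΓ (h ▸ hγtΓ)
  set f : (Fin d → ℝ) → ℝ := fun γ => ∑ i, q i * Real.log (p0 i / γ i) with hf
  -- Step A: f q < f γt  (Gibbs' inequality)
  have gibbs : f q < f γt := by
    have key : ∑ i, q i * Real.log (γt i / q i) < ∑ i, q i * (γt i / q i - 1) := by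
      obtain ⟨j, hj⟩ : ∃ j, q j ≠ γt j := by
        by_contra hc; push_neg at hc; exact hne (funext hc)
      refine Finset.sum_lt_sum (fun i _ => ?_) ⟨j, Finset.mem_univ j, ?_⟩
      · have hpos : 0 < γt i / q i := div_pos (hγtpos i) (hqpos i)
        exact mul_le_mul_of_nonneg_left (Real.log_le_sub_one_of_pos hpos) (hqpos i).le
      · have hpos : 0 < γt j / q j := div_pos (hγtpos j) (hqpos j)
        have hne1 : γt j / q j ≠ 1 := by
          intro h
          exact hj ((div_eq_one_iff_eq (hqpos j).ne').mp h).symm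
        exact mul_lt_mul_of_pos_left (Real.log_lt_sub_one_of_pos hpos hne1) (hqpos j)
    have hsum : ∑ i, q i * (γt i / q i - 1) = 0 := by
      have heq : ∀ i, q i * (γt i / q i - 1) = γt i - q i := by
        intro i
        have hne0 : q i ≠ 0 := (hqpos i).ne'
        field_simp
      rw [Finset.sum_congr rfl (fun i _ => heq i), Finset.sum_sub_distrib, hsumγ, hsumq]
      ring
    have expand : f γt - f q = -∑ i, q i * Real.log (γt i / q i) := by
      rw [hf]
      simp only
      rw [← Finset.sum_sub_distrib, ← Finset.sum_neg_distrib]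
      refine Finset.sum_congr rfl (fun i _ => ?_)
      rw [Real.log_div (hp0pos i).ne' (hγtpos i).ne',
          Real.log_div (hp0pos i).ne' (hqpos i).ne',
          Real.log_div (hγtpos i).ne' (hqpos i).ne']
      ring
    have : ∑ i, q i * Real.log (γt i / q i) < 0 := by linarith
    linarith
  -- Step B: choose a small t with F at the convex combination still negative
  have hgcont : Continuous fun t : ℝ => F ((1-t) • γt + t • q) := by
    apply hFcont.comp
    continuity
  have hg0 : (fun t : ℝ => F ((1-t) • γt + t • q)) 0 < 0 := by simpa using hFlt
  have hev : ∀ᶠ t in nhds (0:ℝ), F ((1-t) • γt + t • q) < 0 :=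
    (hgcont.continuousAt).eventually_lt continuousAt_const (by simpa using hFlt)
  obtain ⟨ε, hε, hball⟩ := Metric.eventually_nhds_iff.mp hev
  set t : ℝ := min (ε/2) (1/2) with ht
  have ht0 : 0 < t := lt_min (by linarith) (by norm_num)
  have ht1 : t < 1 := lt_of_le_of_lt (min_le_right _ _) (by norm_num)
  have htε : dist t 0 < ε := by
    rw [Real.dist_eq, sub_zero, abs_of_pos ht0]
    calc t ≤ ε/2 := min_le_left _ _
      _ < ε := by linarith
  have hgt : F ((1-t) • γt + t • q) < 0 := hball htε
  set γs : Fin d → ℝ := (1-t) • γt + t • q with hγs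
  have hγssimp : γs ∈ stdSimplex ℝ (Fin d) :=
    convex_stdSimplex ℝ (Fin d) hγtsimp hq (by linarith) ht0.le (by ring)
  have hγsΓ : γs ∈ Γ := by rw [hΓ]; exact ⟨hγssimp, hgt.le⟩
  have hγsi : ∀ i, γs i = (1-t) * γt i + t * q i := by
    intro i; simp [hγs]
  have hγspos : ∀ i, 0 < γs i := by
    intro i
    rw [hγsi i]
    have := mul_pos (by linarith : (0:ℝ) < 1 - t) (hγtpos i)
    have := mul_pos ht0 (hqpos i)
    linarith
  -- concavity of log along the segment
  have hlog : ∀ i, (1-t) * Real.log (γt i) + t * Real.log (q i) ≤ Real.log (γs i) := by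
    intro i
    have h := strictConcaveOn_log_Ioi.concaveOn.2 (Set.mem_Ioi.mpr (hγtpos i))
      (Set.mem_Ioi.mpr (hqpos i)) (by linarith : (0:ℝ) ≤ 1 - t) ht0.le (by ring)
    rw [hγsi i]
    simpa [smul_eq_mul] using h
  have hfle : f γs ≤ (1-t) * f γt + t * f q := by
    have per : ∀ i, q i * Real.log (p0 i / γs i) ≤
        (1-t) * (q i * Real.log (p0 i / γt i)) + t * (q i * Real.log (p0 i / q i)) := by
      intro i
      rw [Real.log_div (hp0pos i).ne' (hγspos i).ne',
          Real.log_div (hp0pos i).ne' (hγtpos i).ne',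
          Real.log_div (hp0pos i).ne' (hqpos i).ne']
      have h1 := hlog i
      have h2 : 0 ≤ q i * (Real.log (γs i) - ((1-t) * Real.log (γt i) + t * Real.log (q i))) :=
        mul_nonneg (hqpos i).le (by linarith)
      nlinarith [h2]
    calc f γs = ∑ i, q i * Real.log (p0 i / γs i) := rfl
      _ ≤ ∑ i, ((1-t) * (q i * Real.log (p0 i / γt i)) + t * (q i * Real.log (p0 i / q i))) :=
          Finset.sum_le_sum (fun i _ => per i)
      _ = (1-t) * f γt + t * f q := by
          rw [Finset.sum_add_distrib, ← Finset.mul_sum, ← Finset.mul_sum]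
  have hlt : f γs < f γt := by nlinarith [mul_lt_mul_of_pos_left gibbs ht0]
  have hge : f γt ≤ f γs := isMinOn_iff.mp hmin γs hγsΓ
  linarith


end
end

section
/- Suppose Conditions (A1')–(A3') hold, p0(i) > 0 for all i, and p0 ∉ Γ. Then there exists η̂ > 0 such that for every q ∈ B(p0, η̂), with γ̃ = g(q) the unique minimizer and j ∈ X a symbol with ∂F(γ̃)/∂γ_j − Σ_k γ̃_k ∂F(γ̃)/∂γ_k ≠ 0, the following identity holds for every i ∈ X with i ≠ j: q(i) = γ̃_i + [(q(j) − γ̃_j)·γ̃_i / (γ̃_j·(∂F(γ̃)/∂γ_j − Σ_{k=1}^d γ̃_k ∂F(γ̃)/∂γ_k))] · (∂F(γ̃)/∂γ_i − Σ_{k=1}^d γ̃_k ∂F(γ̃)/∂γ_k). -/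
noncomputable section

/-- `∂F(γ)/∂γ_i - Σ_k γ_k ∂F(γ)/∂γ_k`. -/
def dCoef {d : ℕ} (F : (Fin d → ℝ) → ℝ) (γ : Fin d → ℝ) (i : Fin d) : ℝ :=
  fderiv ℝ F γ (Pi.single i 1) - ∑ k, γ k * fderiv ℝ F γ (Pi.single k 1)

/-!
Since `γ̃` has positive coordinates, near `γ̃` the only active constraints are `Σ γ = 1` and
`F ≤ 0`; and `F` is differentiable at `γ̃`, since otherwise `fderiv` is `0` and so is every
`dCoef F γ̃ j`. Hence every direction `v` with `Σ v = 0` and `DF(γ̃) v < 0` is feasible, and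
minimality, the objective having gradient `-q / γ̃`, gives `Σ q_k v_k / γ̃_k ≤ 0` for such `v`.
As `dCoef F γ̃ j ≠ 0`, such directions exist, so the functional `v ↦ Σ q_k v_k / γ̃_k`
vanishes on `ker (Σ) ∩ ker DF(γ̃)` and is a combination `α Σ + β DF(γ̃)` (Lagrange
multipliers). Pairing with `γ̃` gives `α + β DF(γ̃) γ̃ = 1`, i.e.
`q_k = γ̃_k (1 + β dCoef F γ̃ k)`; eliminating `β` through the index `j` gives the identity.
-/

open Filter Topology

theorem HasDerivAt.eventually_lt_of_neg {φ : ℝ → ℝ} {m a : ℝ} (hφ : HasDerivAt φ m a)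
    (hm : m < 0) : ∀ᶠ t in 𝓝[>] a, φ t < φ a := by
  filter_upwards [hφ.hasDerivWithinAt.limsup_slope_le' (lt_irrefl a) hm, self_mem_nhdsWithin]
    with t hslope (ht : a < t)
  rw [slope_def_field, div_neg_iff] at hslope
  rcases hslope with ⟨-, h⟩ | ⟨h, -⟩ <;> linarith

theorem HasFDerivAt.eventually_add_smul_neg {E : Type*} [NormedAddCommGroup E] [NormedSpace ℝ E]
    {F : E → ℝ} {L : E →L[ℝ] ℝ} {x v : E} (hF : HasFDerivAt F L x) (hx : F x ≤ 0)
    (hv : L v < 0) : ∀ᶠ t in 𝓝[>] (0 : ℝ), F (x + t • v) < 0 := by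
  have hline : HasDerivAt (fun t : ℝ => x + t • v) v 0 := by
    simpa using ((hasDerivAt_id (0 : ℝ)).smul_const v).const_add x
  have hφ : HasDerivAt (fun t : ℝ => F (x + t • v)) (L v) 0 :=
    (by simpa using hF : HasFDerivAt F L (x + (0 : ℝ) • v)).comp_hasDerivAt 0 hline
  filter_upwards [hφ.eventually_lt_of_neg hv] with t ht
  simp only [zero_smul, add_zero] at ht
  linarith

section Simplex

variable {ι : Type*} [Fintype ι]

theorem eventually_add_smul_mem_stdSimplex {x v : ι → ℝ} (hx : ∀ i, 0 < x i)
    (hx₁ : ∑ i, x i = 1) (hv : ∑ i, v i = 0) :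
    ∀ᶠ t in 𝓝 (0 : ℝ), x + t • v ∈ stdSimplex ℝ ι := by
  have hpos : ∀ᶠ t in 𝓝 (0 : ℝ), ∀ i, 0 < x i + t * v i := by
    refine eventually_all.2 fun i => ?_
    have hcont : Continuous fun t : ℝ => x i + t * v i := by fun_prop
    exact continuousAt_const.eventually_lt hcont.continuousAt (by simpa using hx i)
  filter_upwards [hpos] with t ht
  refine ⟨fun i => (ht i).le, ?_⟩
  simp [Finset.sum_add_distrib, ← Finset.mul_sum, hx₁, hv]

theorem hasDerivAt_sum_mul_log_div_add_smul {p q x : ι → ℝ} (v : ι → ℝ) (hp : ∀ i, p i ≠ 0)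
    (hx : ∀ i, x i ≠ 0) :
    HasDerivAt (fun t : ℝ => ∑ i, q i * Real.log (p i / (x + t • v) i))
      (-∑ i, q i * (v i / x i)) 0 := by
  rw [← Finset.sum_neg_distrib]
  refine HasDerivAt.fun_sum fun i _ => ?_
  have hline : HasDerivAt (fun t : ℝ => x i + t * v i) (v i) 0 := by
    simpa using ((hasDerivAt_id (0 : ℝ)).mul_const (v i)).const_add (x i)
  have hxi := hx i
  have hpi := hp i
  have hlog := ((hasDerivAt_const (0 : ℝ) (p i)).div hline (by simpa using hxi)).log
    (by simpa using div_ne_zero hpi hxi)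
  refine (hlog.const_mul (q i)).congr_deriv ?_
  simp only [Pi.div_apply, zero_mul, add_zero, zero_sub]
  field_simp

theorem sum_mul_div_nonpos_of_isMinOn {p q x v : ι → ℝ} {S : Set (ι → ℝ)}
    (hp : ∀ i, p i ≠ 0) (hx : ∀ i, x i ≠ 0)
    (hmin : IsMinOn (fun γ => ∑ i, q i * Real.log (p i / γ i)) S x)
    (hv : ∀ᶠ t in 𝓝[>] (0 : ℝ), x + t • v ∈ S) : ∑ i, q i * (v i / x i) ≤ 0 := by
  by_contra! hpos
  have hdesc := (hasDerivAt_sum_mul_log_div_add_smul (q := q) v hp hx).eventually_lt_of_neg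
    (neg_lt_zero.2 hpos)
  obtain ⟨t, hlt, hmem⟩ := (hdesc.and hv).exists
  simp only [zero_smul, add_zero] at hlt
  exact hlt.not_ge (hmin hmem)

end Simplex

theorem LinearMap.exists_smul_add_smul_eq_of_nonpos {E : Type*} [AddCommGroup E] [Module ℝ E]
    {f ℓ₁ ℓ₂ : E →ₗ[ℝ] ℝ} {w : E} (hw₁ : ℓ₁ w = 0) (hw₂ : ℓ₂ w < 0)
    (h : ∀ v, ℓ₁ v = 0 → ℓ₂ v < 0 → f v ≤ 0) : ∃ α β : ℝ, α • ℓ₁ + β • ℓ₂ = f := by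
  have hker : ⨅ i, LinearMap.ker (![ℓ₁, ℓ₂] i) ≤ LinearMap.ker f := by
    intro v hv
    simp only [Submodule.mem_iInf, LinearMap.mem_ker, Fin.forall_fin_two, Matrix.cons_val_zero,
      Matrix.cons_val_one] at hv
    obtain ⟨hv₁, hv₂⟩ := hv
    rw [LinearMap.mem_ker]
    by_contra hv
    -- `h` bounds `f` above on the line `w + ℝ v`, where `ℓ₁ = 0` and `ℓ₂ < 0`
    have := h (((1 - f w) / f v) • v + w) (by simp [hv₁, hw₁]) (by simpa [hv₂] using hw₂)
    norm_num [hv] at this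
  have hspan := mem_span_of_iInf_ker_le_ker hker
  rw [Matrix.range_cons_cons_empty, Submodule.mem_span_pair] at hspan
  exact hspan

theorem differentiableAt_of_dCoef_ne_zero {d : ℕ} {F : (Fin d → ℝ) → ℝ} {γ : Fin d → ℝ}
    {j : Fin d} (hj : dCoef F γ j ≠ 0) : DifferentiableAt ℝ F γ := by
  contrapose! hj
  simp [dCoef, fderiv_zero_of_not_differentiableAt hj]

theorem ContinuousLinearMap.apply_eq_sum_mul_single {R ι : Type*} [Semiring R]
    [TopologicalSpace R] [Fintype ι] [DecidableEq ι] (L : (ι → R) →L[R] R) (v : ι → R) :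
    L v = ∑ k, v k * L (Pi.single k 1) := by
  conv_lhs => rw [← Finset.univ_sum_single v, map_sum]
  refine Finset.sum_congr rfl fun k _ => ?_
  rw [← smul_eq_mul, ← L.map_smul, ← Pi.single_smul', smul_eq_mul, mul_one]

theorem fderiv_single_sub_eq_dCoef {d : ℕ} (F : (Fin d → ℝ) → ℝ) (γ : Fin d → ℝ) (j : Fin d) :
    fderiv ℝ F γ (Pi.single j 1 - γ) = dCoef F γ j := by
  rw [map_sub, (fderiv ℝ F γ).apply_eq_sum_mul_single γ, dCoef]

theorem exists_eq_add_mul_dCoef_of_isMinOn {d : ℕ} {p q γ : Fin d → ℝ}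
    {F : (Fin d → ℝ) → ℝ} {j : Fin d} (hp : ∀ i, p i ≠ 0) (hq : ∑ i, q i = 1)
    (hγ : ∑ i, γ i = 1) (hγpos : ∀ i, 0 < γ i) (hFγ : F γ ≤ 0)
    (hmin : IsMinOn (fun γ => ∑ i, q i * Real.log (p i / γ i))
      {γ ∈ stdSimplex ℝ (Fin d) | F γ ≤ 0} γ)
    (hj : dCoef F γ j ≠ 0) :
    ∃ β, ∀ k, q k = γ k + β * γ k * dCoef F γ k := by
  set L := fderiv ℝ F γ
  have hF : HasFDerivAt F L γ := (differentiableAt_of_dCoef_ne_zero hj).hasFDerivAt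
  have hdesc : ∀ v, Fintype.linearCombination ℝ (fun _ => (1 : ℝ)) v = 0 → L v < 0 →
      Fintype.linearCombination ℝ (fun k => q k / γ k) v ≤ 0 := by
    intro v hv hLv
    simp only [Fintype.linearCombination_apply, smul_eq_mul, mul_one] at hv ⊢
    refine (Finset.sum_congr rfl fun k _ => by ring).trans_le
      (sum_mul_div_nonpos_of_isMinOn hp (fun k => (hγpos k).ne') hmin ?_)
    filter_upwards [nhdsWithin_le_nhds (eventually_add_smul_mem_stdSimplex hγpos hγ hv),
      hF.eventually_add_smul_neg hFγ hLv] with t hsimplex hneg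
    exact ⟨hsimplex, hneg.le⟩
  obtain ⟨α, β, hαβ⟩ := LinearMap.exists_smul_add_smul_eq_of_nonpos (ℓ₂ := L.toLinearMap)
    (w := -dCoef F γ j • (Pi.single j 1 - γ))
    (by simp [Fintype.linearCombination_apply, ← Finset.mul_sum, Finset.sum_sub_distrib, hγ])
    (by simpa [fderiv_single_sub_eq_dCoef, L] using mul_self_pos.2 hj) hdesc
  have hcoord : ∀ k, q k / γ k = α + β * L (Pi.single k 1) := fun k => by
    simpa [Fintype.linearCombination_apply, Pi.single_apply] using
      (LinearMap.congr_fun hαβ (Pi.single k 1)).symm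
  have hα : α + β * L γ = 1 := by
    have hγq : ∑ k, γ k * (q k / γ k) = 1 := by
      rw [← hq]
      exact Finset.sum_congr rfl fun k _ => mul_div_cancel₀ _ (hγpos k).ne'
    simpa [Fintype.linearCombination_apply, hγ, hγq] using LinearMap.congr_fun hαβ γ
  refine ⟨β, fun k => ?_⟩
  rw [dCoef, ← L.apply_eq_sum_mul_single, ← div_mul_cancel₀ (q k) (hγpos k).ne', hcoord k]
  linear_combination γ k * hα

theorem kkt_identity_general {d : ℕ} (p0 : Fin d → ℝ) (F : (Fin d → ℝ) → ℝ)
    (Γ : Set (Fin d → ℝ))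
    (hp0pos : ∀ i, 0 < p0 i)
    (hΓ : Γ = {γ ∈ stdSimplex ℝ (Fin d) | F γ ≤ 0})
    (c0 : ℝ) (hc0 : 0 < c0) (hΓpos : ∀ γ ∈ Γ, ∀ i, c0 ≤ γ i) :
    ∃ ηhat > 0, ∀ q ∈ stdSimplex ℝ (Fin d), (∀ i, |q i - p0 i| < ηhat) → q ∉ Γ →
      ∀ γtil, (γtil ∈ Γ ∧ IsMinOn (fun γ => ∑ i, q i * Real.log (p0 i / γ i)) Γ γtil) →
        ∀ j : Fin d, dCoef F γtil j ≠ 0 →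
          ∀ i : Fin d, i ≠ j →
            q i = γtil i
              + (q j - γtil j) * γtil i / (γtil j * dCoef F γtil j) * dCoef F γtil i := by
  refine ⟨1, one_pos, fun q hq _ _ γtil ⟨hγΓ, hγmin⟩ j hj i _ => ?_⟩
  have hγpos : ∀ k, 0 < γtil k := fun k => hc0.trans_le (hΓpos γtil hγΓ k)
  subst hΓ
  obtain ⟨β, hβ⟩ := exists_eq_add_mul_dCoef_of_isMinOn (fun k => (hp0pos k).ne') hq.2 hγΓ.1.2
    hγpos hγΓ.2 hγmin hj
  have hγj := (hγpos j).ne'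
  rw [hβ i, hβ j]
  field_simp
  ring

/-- **The KKT identity for the optimizer (Lemma `continuity`, part (v)).**
Under (A1')--(A3'), with `p0` a strictly positive pmf not in `Γ`, there is `η̂ > 0`
such that for every pmf `q` with `|q i - p0 i| < η̂` for all `i` (and `q ∉ Γ`), with
`γ̃` the unique minimizer of `γ ↦ Σ_i q i log (p0 i / γ i)` over `Γ` and `j` any
symbol with `∂F(γ̃)/∂γ_j - Σ_k γ̃_k ∂F(γ̃)/∂γ_k ≠ 0`, one has, for every `i ≠ j`,
`q i = γ̃ i + [(q j - γ̃ j) γ̃ i / (γ̃ j (∂F(γ̃)/∂γ_j - Σ_k γ̃_k ∂F(γ̃)/∂γ_k))] ·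
(∂F(γ̃)/∂γ_i - Σ_k γ̃_k ∂F(γ̃)/∂γ_k)`. -/
theorem kkt_identity {d : ℕ} (p0 : Fin d → ℝ) (F : (Fin d → ℝ) → ℝ)
    (Γ : Set (Fin d → ℝ))
    (hp0 : p0 ∈ stdSimplex ℝ (Fin d)) (hp0pos : ∀ i, 0 < p0 i)
    (hFconv : ConvexOn ℝ Set.univ F) (hFcont : Continuous F)
    (hΓ : Γ = {γ ∈ stdSimplex ℝ (Fin d) | F γ ≤ 0})
    (hΓne : Γ.Nonempty) (hp0notin : p0 ∉ Γ)
    (c0 : ℝ) (hc0 : 0 < c0) (hΓpos : ∀ γ ∈ Γ, ∀ i, c0 ≤ γ i)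
    (γ' : Fin d → ℝ) (hγ'mem : γ' ∈ Γ)
    (hγ'min : IsMinOn (fun γ => ∑ i, p0 i * Real.log (p0 i / γ i)) Γ γ')
    (η : ℝ) (hη : 0 < η) (hFsmooth : ContDiffOn ℝ (⊤ : ℕ∞) F (Metric.ball γ' η)) :
    ∃ ηhat > 0, ∀ q ∈ stdSimplex ℝ (Fin d), (∀ i, |q i - p0 i| < ηhat) → q ∉ Γ →
      ∀ γtil, (γtil ∈ Γ ∧ IsMinOn (fun γ => ∑ i, q i * Real.log (p0 i / γ i)) Γ γtil) →
        ∀ j : Fin d, dCoef F γtil j ≠ 0 →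
          ∀ i : Fin d, i ≠ j →
            q i = γtil i
              + (q j - γtil j) * γtil i / (γtil j * dCoef F γtil j) * dCoef F γtil i :=
  kkt_identity_general p0 F Γ hp0pos hΓ c0 hc0 hΓpos

end
end

section
/- Suppose Conditions (A1')–(A4') hold, p0(i) > 0 for all i, and p0 ∉ Γ. Then there exists ζ > 0 such that the minimizer map q ↦ g(q) is smooth on the ball B(p0, ζ), and for all q ∈ B(p0, ζ) and every i ∈ X it satisfies the identity Σ_{j=1}^d (q(j)/g_j(q)) · ∂g_j(q)/∂q(i) = 0. -/
/-!
The constraint is active at `γ'`: if `F γ' < 0`, then `γ'` would be a local, hence (the objective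
being convex) a global minimiser over the positive part of the simplex, beating `p0` itself, which
strict Gibbs' inequality forbids because `γ' ≠ p0`. Hence `kktMap F (γ', λ, μ) = (p0, 1, 0)`, and by
the inverse function theorem `kktMap F` has a smooth local right inverse near `(p0, 1, 0)`; `g q` is
the `γ`-component of its value at `(q, 1, 0)`.

The multiplier `μ` is positive: `μ = 0` forces `p0 = γ'`, while `μ < 0` contradicts first-order
optimality of `γ'` tested against a feasible point with `F < 0`, which the local inverse provides
at `(p0, 1, s)`, `s < 0`. With a positive multiplier the KKT conditions are sufficient for
optimality, `F` being convex. Finally, stationarity `q j / g_j = λ + μ ∂_j F` turns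
`Σ_j (q j / g_j) ∂g_j/∂q_i` into `λ ∂_i (Σ_j g_j) + μ ∂_i (F ∘ g)`, and both terms vanish because
`Σ_j g_j ≡ 1` and `F ∘ g ≡ 0` near `q`.
-/

noncomputable section

/-- The Karush--Kuhn--Tucker map associated to the optimization problem
`min Σ_i q i log (p0 i / γ i)` subject to `Σ_i γ i = 1`, `F γ ≤ 0`:
`(γ, λ, μ) ↦ ((λ γ_i + μ γ_i ∂F(γ)/∂γ_i)_i, Σ_i γ_i, F γ)`.
The stationarity condition reads `q i = λ γ_i + μ γ_i ∂F(γ)/∂γ_i`. -/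
def kktMap {d : ℕ} (F : (Fin d → ℝ) → ℝ) :
    ((Fin d → ℝ) × ℝ × ℝ) → ((Fin d → ℝ) × ℝ × ℝ) := fun x =>
  (fun i => x.2.1 * x.1 i + x.2.2 * x.1 i * fderiv ℝ F x.1 (Pi.single i 1),
    ∑ i, x.1 i, F x.1)

open Set Metric Filter Topology Real

theorem ConvexOn.fderiv_apply_sub_le {E : Type*} [NormedAddCommGroup E] [NormedSpace ℝ E]
    {s : Set E} {f : E → ℝ} {x y : E} (hf : ConvexOn ℝ s f) (hx : x ∈ s) (hy : y ∈ s)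
    (hfx : DifferentiableAt ℝ f x) : fderiv ℝ f x (y - x) ≤ f y - f x := by
  have hderiv : HasDerivAt (f ∘ AffineMap.lineMap (k := ℝ) x y) (fderiv ℝ f x (y - x)) 0 := by
    have hfx' : HasFDerivAt f (fderiv ℝ f x) (AffineMap.lineMap (k := ℝ) x y 0) := by
      simpa using hfx.hasFDerivAt
    exact hfx'.comp_hasDerivAt _ AffineMap.hasDerivAt_lineMap
  simpa [slope_def_field] using
    (hf.comp_affineMap (AffineMap.lineMap x y)).le_slope_of_hasDerivAt
      (by simpa using hx) (by simpa using hy) one_pos hderiv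

theorem isOpen_setOf_forall_pos {ι : Type*} [Finite ι] :
    IsOpen {x : ι → ℝ | ∀ i, 0 < x i} := by
  simpa only [ofPred_forall] using isOpen_iInter_of_finite fun i =>
    isOpen_lt continuous_const (continuous_apply i)

theorem convex_setOf_forall_pos {ι : Type*} : Convex ℝ {x : ι → ℝ | ∀ i, 0 < x i} :=
  fun _ hx _ hy _ _ ha hb hab i => convex_Ioi (0 : ℝ) (hx i) (hy i) ha hb hab

theorem ConvexOn.continuous_of_univ {E : Type*} [NormedAddCommGroup E] [NormedSpace ℝ E]
    [FiniteDimensional ℝ E] {f : E → ℝ} (hf : ConvexOn ℝ univ f) : Continuous f :=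
  continuousOn_univ.1 (hf.continuousOn isOpen_univ)

theorem exists_contDiffOn_rightInverse {𝕜 : Type*} [RCLike 𝕜] {E F : Type*}
    [NormedAddCommGroup E] [NormedSpace 𝕜 E] [CompleteSpace E]
    [NormedAddCommGroup F] [NormedSpace 𝕜 F] [CompleteSpace F]
    {n : WithTop ℕ∞} {f : E → F} {U : Set E} {x₀ : E} (hn : 1 ≤ n) (hU : IsOpen U)
    (hx₀ : x₀ ∈ U) (hf : ContDiffOn 𝕜 n f U) (hf' : Function.Bijective (fderiv 𝕜 f x₀)) :
    ∃ ψ : F → E, ∃ V : Set F, IsOpen V ∧ f x₀ ∈ V ∧ ContDiffOn 𝕜 n ψ V ∧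
      ∀ y ∈ V, ψ y ∈ U ∧ f (ψ y) = y := by
  have hn₀ : n ≠ 0 := (zero_lt_one.trans_le hn).ne'
  have hfU : ∀ x ∈ U, ContDiffAt 𝕜 n f x := fun x hx => hf.contDiffAt (hU.mem_nhds hx)
  set e₀ := ContinuousLinearEquiv.ofBijective (fderiv 𝕜 f x₀)
    (LinearMap.ker_eq_bot.2 hf'.1) (LinearMap.range_eq_top.2 hf'.2)
  have hstrict : HasStrictFDerivAt f (e₀ : E →L[𝕜] F) x₀ := by
    rw [ContinuousLinearEquiv.coe_ofBijective]
    exact (hfU x₀ hx₀).hasStrictFDerivAt hn₀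
  set P := hstrict.toOpenPartialHomeomorph f
  have hP : ⇑P = f := hstrict.toOpenPartialHomeomorph_coe
  set W := U ∩ fderiv 𝕜 f ⁻¹' range ((↑) : (E ≃L[𝕜] F) → E →L[𝕜] F)
  have hW : IsOpen W :=
    (hf.continuousOn_fderiv_of_isOpen hU hn).isOpen_inter_preimage hU
      ContinuousLinearEquiv.isOpen
  refine ⟨P.symm, P.target ∩ P.symm ⁻¹' W,
    P.continuousOn_symm.isOpen_inter_preimage P.open_target hW, ?_, ?_, ?_⟩
  · refine ⟨hP ▸ hstrict.image_mem_toOpenPartialHomeomorph_target, ?_⟩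
    rw [mem_preimage, ← hP, P.left_inv hstrict.mem_toOpenPartialHomeomorph_source]
    exact ⟨hx₀, e₀, ContinuousLinearEquiv.coe_ofBijective _ _ _⟩
  · rintro y ⟨hy, hyU, e, he⟩
    refine (P.contDiffAt_symm (f₀' := e) hy ?_ ?_).contDiffWithinAt
    · rw [he]
      exact ((hfU _ hyU).differentiableAt hn₀).hasFDerivAt
    · rw [hP]
      exact hfU _ hyU
  · rintro y ⟨hy, hyW⟩
    exact ⟨hyW.1, hP ▸ P.right_inv hy⟩

section

variable {d : ℕ}

theorem sum_mul_log_div_pos {p γ : Fin d → ℝ} (hp : ∀ i, 0 < p i) (hγ : ∀ i, 0 < γ i)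
    (hsum : ∑ i, γ i ≤ ∑ i, p i) (hne : γ ≠ p) : 0 < ∑ i, p i * log (p i / γ i) := by
  obtain ⟨k, hk⟩ := Function.ne_iff.mp hne
  have hterm : ∀ i, p i - γ i ≤ p i * log (p i / γ i) := fun i => by
    have := mul_le_mul_of_nonneg_left
      (one_sub_inv_le_log_of_pos (div_pos (hp i) (hγ i))) (hp i).le
    rwa [inv_div, mul_one_sub, mul_div_cancel₀ _ (hp i).ne'] at this
  have hterm_k : p k - γ k < p k * log (p k / γ k) := by
    have hlt := log_lt_sub_one_of_pos (div_pos (hγ k) (hp k))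
      (by rwa [Ne, div_eq_one_iff_eq (hp k).ne'])
    rw [← inv_div, log_inv]
    linarith [mul_lt_mul_of_pos_left hlt (hp k), mul_div_cancel₀ (γ k) (hp k).ne']
  calc 0 ≤ ∑ i, (p i - γ i) := by rw [Finset.sum_sub_distrib]; linarith
    _ < ∑ i, p i * log (p i / γ i) :=
      Finset.sum_lt_sum (fun i _ => hterm i) ⟨k, Finset.mem_univ k, hterm_k⟩

theorem convexOn_sum_mul_log_div {p q : Fin d → ℝ} (hp : ∀ i, 0 < p i) (hq : ∀ i, 0 ≤ q i) :
    ConvexOn ℝ {γ : Fin d → ℝ | ∀ i, 0 < γ i} (fun γ => ∑ i, q i * log (p i / γ i)) := by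
  refine ⟨convex_setOf_forall_pos, fun x hx y hy a b ha hb hab => ?_⟩
  simp only [smul_eq_mul, Finset.mul_sum, ← Finset.sum_add_distrib]
  refine Finset.sum_le_sum fun i _ => ?_
  have hlog : a * log (x i) + b * log (y i) ≤ log (a * x i + b * y i) :=
    strictConcaveOn_log_Ioi.concaveOn.2 (hx i) (hy i) ha hb hab
  have hxy : 0 < a * x i + b * y i := convex_Ioi (0 : ℝ) (hx i) (hy i) ha hb hab
  simp only [Pi.add_apply, Pi.smul_apply, smul_eq_mul]
  rw [log_div (hp i).ne' hxy.ne', log_div (hp i).ne' (hx i).ne', log_div (hp i).ne' (hy i).ne']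
  obtain rfl : b = 1 - a := by linarith
  linear_combination mul_le_mul_of_nonneg_left hlog (hq i)

theorem hasFDerivAt_sum_mul_log_div {p q γ : Fin d → ℝ} (hp : ∀ i, 0 < p i)
    (hγ : ∀ i, 0 < γ i) :
    HasFDerivAt (fun γ => ∑ i, q i * log (p i / γ i))
      (∑ i, (-(q i / γ i)) • (ContinuousLinearMap.proj i : (Fin d → ℝ) →L[ℝ] ℝ)) γ := by
  refine HasFDerivAt.fun_sum fun i _ => ?_
  have hlog := (((hasFDerivAt_apply i γ).log (hγ i).ne').const_sub (log (p i))).const_mul (q i)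
  refine (hlog.congr_fderiv ?_).congr_of_eventuallyEq ?_
  · ext v
    simp [div_eq_mul_inv, mul_assoc]
  · filter_upwards [isOpen_setOf_forall_pos.mem_nhds hγ] with γ' hγ'
    rw [log_div (hp i).ne' (hγ' i).ne']

theorem IsMinOn.sum_div_mul_sub_nonpos {p q γ₀ γ : Fin d → ℝ} {s : Set (Fin d → ℝ)}
    (hmin : IsMinOn (fun γ => ∑ i, q i * log (p i / γ i)) s γ₀) (hs : Convex ℝ s)
    (hγ₀ : γ₀ ∈ s) (hγ : γ ∈ s) (hp : ∀ i, 0 < p i) (hγ₀pos : ∀ i, 0 < γ₀ i) :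
    ∑ i, q i / γ₀ i * (γ i - γ₀ i) ≤ 0 := by
  have := hmin.localize.hasFDerivWithinAt_nonneg
    (hasFDerivAt_sum_mul_log_div hp hγ₀pos).hasFDerivWithinAt
    (sub_mem_posTangentConeAt_of_segment_subset (hs.segment_subset hγ₀ hγ))
  simpa [Finset.sum_neg_distrib] using this

variable {F : (Fin d → ℝ) → ℝ}

theorem kktMap_eq_iff {γ q : Fin d → ℝ} {lam mu a b : ℝ} :
    kktMap F (γ, lam, mu) = (q, a, b) ↔
      (∀ i, q i = lam * γ i + mu * γ i * fderiv ℝ F γ (Pi.single i 1)) ∧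
        ∑ i, γ i = a ∧ F γ = b := by
  simp only [kktMap, Prod.mk.injEq, funext_iff, eq_comm]

theorem contDiffOn_kktMap {n : WithTop ℕ∞} {O : Set (Fin d → ℝ)} (hO : IsOpen O)
    (hF : ContDiffOn ℝ (n + 1) F O) : ContDiffOn ℝ n (kktMap F) {x | x.1 ∈ O} := by
  have hfst : MapsTo (fun x : (Fin d → ℝ) × ℝ × ℝ => x.1) {x | x.1 ∈ O} O := fun _ hx => hx
  have hDF : ContDiffOn ℝ n (fun x : (Fin d → ℝ) × ℝ × ℝ => fderiv ℝ F x.1) {x | x.1 ∈ O} :=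
    (hF.fderiv_of_isOpen hO le_rfl).comp contDiff_fst.contDiffOn hfst
  have hcoord : ∀ i : Fin d, ContDiff ℝ n fun x : (Fin d → ℝ) × ℝ × ℝ => x.1 i :=
    fun i => (contDiff_apply ℝ ℝ i).comp contDiff_fst
  refine ContDiffOn.prodMk (contDiffOn_pi.2 fun i => ?_) (ContDiffOn.prodMk ?_ ?_)
  · exact ((contDiff_fst.comp contDiff_snd).mul (hcoord i)).contDiffOn.add
      (((contDiff_snd.comp contDiff_snd).mul (hcoord i)).contDiffOn.mul
        (hDF.clm_apply contDiffOn_const))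
  · exact (ContDiff.sum fun i _ => hcoord i).contDiffOn
  · exact (hF.of_le le_self_add).comp contDiff_fst.contDiffOn hfst

theorem exists_contDiffOn_rightInverse_kktMap {γ₀ : Fin d → ℝ} {lam mu : ℝ}
    {O : Set (Fin d → ℝ)} {U : Set ((Fin d → ℝ) × ℝ × ℝ)} (hO : IsOpen O)
    (hF : ContDiffOn ℝ (⊤ : ℕ∞) F O) (hU : IsOpen U) (hx₀ : (γ₀, lam, mu) ∈ U)
    (hUO : U ⊆ {x | x.1 ∈ O})
    (hbij : Function.Bijective (fderiv ℝ (kktMap F) (γ₀, lam, mu))) :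
    ∃ ψ : (Fin d → ℝ) × ℝ × ℝ → (Fin d → ℝ) × ℝ × ℝ, ∃ V, IsOpen V ∧
      kktMap F (γ₀, lam, mu) ∈ V ∧ ContDiffOn ℝ (⊤ : ℕ∞) ψ V ∧
      ∀ y ∈ V, ψ y ∈ U ∧ kktMap F (ψ y) = y :=
  exists_contDiffOn_rightInverse (by simp) hU hx₀
    ((contDiffOn_kktMap hO (hF.of_le (by simp))).mono hUO) hbij

theorem sum_div_mul_eq_of_kktMap_eq {γ q : Fin d → ℝ} {lam mu a b : ℝ}
    (hK : kktMap F (γ, lam, mu) = (q, a, b)) (hγ : ∀ i, γ i ≠ 0) (v : Fin d → ℝ) :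
    ∑ j, q j / γ j * v j = lam * ∑ j, v j + mu * fderiv ℝ F γ v := by
  have hv : fderiv ℝ F γ v = ∑ j, v j * fderiv ℝ F γ (Pi.single j 1) := by
    conv_lhs => rw [← Finset.univ_sum_single v, map_sum]
    refine Finset.sum_congr rfl fun j _ => ?_
    rw [← smul_eq_mul, ← map_smul, ← Pi.single_smul', smul_eq_mul, mul_one]
  rw [hv, Finset.mul_sum, Finset.mul_sum, ← Finset.sum_add_distrib]
  refine Finset.sum_congr rfl fun j _ => ?_
  rw [(kktMap_eq_iff.1 hK).1 j]
  field_simp [hγ j]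

theorem isMinOn_of_kktMap_eq {p q γ₀ : Fin d → ℝ} {lam mu : ℝ} (hF : ConvexOn ℝ univ F)
    (hK : kktMap F (γ₀, lam, mu) = (q, 1, 0)) (hmu : 0 ≤ mu) (hFd : DifferentiableAt ℝ F γ₀)
    (hp : ∀ i, 0 < p i) (hq : ∀ i, 0 ≤ q i) (hγ₀ : ∀ i, 0 < γ₀ i)
    (hΓ : ∀ γ ∈ {γ ∈ stdSimplex ℝ (Fin d) | F γ ≤ 0}, ∀ i, 0 < γ i) :
    γ₀ ∈ {γ ∈ stdSimplex ℝ (Fin d) | F γ ≤ 0} ∧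
      IsMinOn (fun γ => ∑ i, q i * log (p i / γ i))
        {γ ∈ stdSimplex ℝ (Fin d) | F γ ≤ 0} γ₀ := by
  obtain ⟨-, hsum, hF0⟩ := kktMap_eq_iff.1 hK
  refine ⟨⟨⟨fun i => (hγ₀ i).le, hsum⟩, hF0.le⟩, isMinOn_iff.2 fun γ hγ => ?_⟩
  have hγpos := hΓ γ hγ
  have hFγ : fderiv ℝ F γ₀ (γ₀ - γ) ≥ 0 := by
    have := hF.fderiv_apply_sub_le (mem_univ γ₀) (mem_univ γ) hFd
    rw [← neg_sub, map_neg]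
    linarith [hγ.2]
  have hlin : ∑ i, q i / γ₀ i * (γ₀ i - γ i) = mu * fderiv ℝ F γ₀ (γ₀ - γ) := by
    have := sum_div_mul_eq_of_kktMap_eq hK (fun i => (hγ₀ i).ne') (γ₀ - γ)
    simp only [Pi.sub_apply, Finset.sum_sub_distrib, hsum, hγ.1.2, sub_self, mul_zero,
      zero_add] at this
    exact this
  have hterm : ∀ i, q i / γ₀ i * (γ₀ i - γ i) ≤
      q i * log (p i / γ i) - q i * log (p i / γ₀ i) := fun i => by
    have := mul_le_mul_of_nonneg_left
      (one_sub_inv_le_log_of_pos (div_pos (hγ₀ i) (hγpos i))) (hq i)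
    rw [inv_div, log_div (hγ₀ i).ne' (hγpos i).ne'] at this
    rw [log_div (hp i).ne' (hγpos i).ne', log_div (hp i).ne' (hγ₀ i).ne']
    have hlhs : q i / γ₀ i * (γ₀ i - γ i) = q i * (1 - γ i / γ₀ i) := by
      field_simp [(hγ₀ i).ne']
    linarith
  have := Finset.sum_le_sum fun i (_ : i ∈ Finset.univ) => hterm i
  rw [hlin, Finset.sum_sub_distrib] at this
  linarith [mul_nonneg hmu hFγ]

theorem sum_div_mul_fderiv_eq_zero {g : (Fin d → ℝ) → Fin d → ℝ} {q : Fin d → ℝ}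
    (hK : ∀ᶠ q' in 𝓝 q, ∃ lam mu, kktMap F (g q', lam, mu) = (q', 1, 0))
    (hg : DifferentiableAt ℝ g q) (hF : DifferentiableAt ℝ F (g q)) (hpos : ∀ j, g q j ≠ 0)
    (v : Fin d → ℝ) : ∑ j, q j / g q j * fderiv ℝ (fun q' => g q' j) q v = 0 := by
  obtain ⟨lam, mu, hKq⟩ := hK.self_of_nhds
  have hcoord : ∀ j, fderiv ℝ (fun q' => g q' j) q v = fderiv ℝ g q v j := fun j =>
    congrArg (· v) ((hasFDerivAt_apply j (g q)).comp q hg.hasFDerivAt).fderiv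
  have hsum : ∑ j, fderiv ℝ g q v j = 0 := by
    have hconst : (fun q' => ∑ j, g q' j) =ᶠ[𝓝 q] fun _ => 1 := hK.mono fun q' ⟨_, _, h⟩ =>
      (kktMap_eq_iff.1 h).2.1
    have := congrArg (· v) (hconst.fderiv_eq.symm.trans (HasFDerivAt.fun_sum fun j _ =>
      (hasFDerivAt_apply j (g q)).comp q hg.hasFDerivAt).fderiv)
    simpa using this.symm
  have hFg : fderiv ℝ F (g q) (fderiv ℝ g q v) = 0 := by
    have hconst : (fun q' => F (g q')) =ᶠ[𝓝 q] fun _ => 0 := hK.mono fun q' ⟨_, _, h⟩ =>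
      (kktMap_eq_iff.1 h).2.2
    have := congrArg (· v)
      (hconst.fderiv_eq.symm.trans (hF.hasFDerivAt.comp q hg.hasFDerivAt).fderiv)
    simpa using this.symm
  simp only [hcoord, sum_div_mul_eq_of_kktMap_eq hKq hpos, hsum, hFg, mul_zero, add_zero]

theorem ConvexOn.apply_eq_zero_of_isMinOn {p γ₀ : Fin d → ℝ} (hF : ConvexOn ℝ univ F)
    (hp : p ∈ stdSimplex ℝ (Fin d)) (hppos : ∀ i, 0 < p i)
    (hpΓ : p ∉ {γ ∈ stdSimplex ℝ (Fin d) | F γ ≤ 0})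
    (hγ₀ : γ₀ ∈ {γ ∈ stdSimplex ℝ (Fin d) | F γ ≤ 0}) (hγ₀pos : ∀ i, 0 < γ₀ i)
    (hmin : IsMinOn (fun γ => ∑ i, p i * log (p i / γ i))
      {γ ∈ stdSimplex ℝ (Fin d) | F γ ≤ 0} γ₀) :
    F γ₀ = 0 := by
  refine le_antisymm hγ₀.2 (not_lt.1 fun hlt => ?_)
  set s := stdSimplex ℝ (Fin d) ∩ {γ | ∀ i, 0 < γ i}
  have hFneg : ∀ᶠ γ in 𝓝 γ₀, F γ < 0 :=
    (hF.continuous_of_univ.tendsto γ₀).eventually (gt_mem_nhds hlt)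
  have hloc : IsLocalMinOn (fun γ => ∑ i, p i * log (p i / γ i)) s γ₀ := by
    filter_upwards [self_mem_nhdsWithin, nhdsWithin_le_nhds hFneg] with γ hγ hFγ
    exact hmin ⟨hγ.1, hFγ.le⟩
  have hglob := IsMinOn.of_isLocalMinOn_of_convexOn (show γ₀ ∈ s from ⟨hγ₀.1, hγ₀pos⟩) hloc
    ((convexOn_sum_mul_log_div hppos fun i => (hppos i).le).subset inter_subset_right
      ((convex_stdSimplex ℝ _).inter convex_setOf_forall_pos))
  have hle := isMinOn_iff.1 hglob p ⟨hp, hppos⟩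
  have hp_zero : ∑ i, p i * log (p i / p i) = 0 := by
    simp [div_self (hppos _).ne']
  have hγ₀_pos := sum_mul_log_div_pos hppos hγ₀pos (hγ₀.1.2.trans hp.2.symm).le
    fun h => hpΓ (h ▸ hγ₀)
  linarith

theorem exists_apply_neg_of_bijective_fderiv_kktMap {p γ₀ : Fin d → ℝ} {lam mu : ℝ}
    {O : Set (Fin d → ℝ)} (hO : IsOpen O) (hγ₀O : γ₀ ∈ O) (hF : ContDiffOn ℝ (⊤ : ℕ∞) F O)
    (hγ₀ : ∀ i, 0 < γ₀ i) (hK : kktMap F (γ₀, lam, mu) = (p, 1, 0))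
    (hbij : Function.Bijective (fderiv ℝ (kktMap F) (γ₀, lam, mu))) :
    ∃ γ ∈ {γ ∈ stdSimplex ℝ (Fin d) | F γ ≤ 0}, F γ < 0 := by
  obtain ⟨ψ, V, hV, hV₀, -, hψV⟩ := exists_contDiffOn_rightInverse_kktMap
    (U := {x | x.1 ∈ O ∩ {γ | ∀ i, 0 < γ i}}) hO hF
    ((hO.inter isOpen_setOf_forall_pos).preimage continuous_fst) ⟨hγ₀O, hγ₀⟩ (fun _ hx => hx.1) hbij
  rw [hK] at hV₀
  have hline : ∀ᶠ s in 𝓝[<] (0 : ℝ), (p, (1 : ℝ), s) ∈ V :=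
    nhdsWithin_le_nhds ((hV.preimage (by fun_prop)).mem_nhds hV₀)
  obtain ⟨s, hsV, hs⟩ := (hline.and self_mem_nhdsWithin).exists
  obtain ⟨⟨-, hpos⟩, hKs⟩ := hψV _ hsV
  obtain ⟨-, hsum, hFs⟩ := kktMap_eq_iff.1 hKs
  exact ⟨_, ⟨⟨fun i => (hpos i).le, hsum⟩, hFs.trans_le (le_of_lt hs)⟩, hFs.trans_lt hs⟩

theorem multiplier_pos_of_kktMap_eq {p γ₀ : Fin d → ℝ} {lam mu : ℝ} (hF : ConvexOn ℝ univ F)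
    (hp : p ∈ stdSimplex ℝ (Fin d)) (hppos : ∀ i, 0 < p i)
    (hpΓ : p ∉ {γ ∈ stdSimplex ℝ (Fin d) | F γ ≤ 0})
    (hγ₀ : γ₀ ∈ {γ ∈ stdSimplex ℝ (Fin d) | F γ ≤ 0}) (hγ₀pos : ∀ i, 0 < γ₀ i)
    (hmin : IsMinOn (fun γ => ∑ i, p i * log (p i / γ i))
      {γ ∈ stdSimplex ℝ (Fin d) | F γ ≤ 0} γ₀)
    (hK : kktMap F (γ₀, lam, mu) = (p, 1, 0)) (hFd : DifferentiableAt ℝ F γ₀)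
    (hslater : ∃ γ ∈ {γ ∈ stdSimplex ℝ (Fin d) | F γ ≤ 0}, F γ < 0) : 0 < mu := by
  obtain ⟨hstat, hsum, hF0⟩ := kktMap_eq_iff.1 hK
  rcases lt_trichotomy mu 0 with hneg | rfl | hpos
  · obtain ⟨γ, hγ, hFγ⟩ := hslater
    have hΓconv := (convex_stdSimplex ℝ (Fin d)).inter (hF.convex_le 0)
    rw [sep_univ] at hΓconv
    have hfirst := hmin.sum_div_mul_sub_nonpos hΓconv hγ₀ hγ hppos hγ₀pos
    have hlin := sum_div_mul_eq_of_kktMap_eq hK (fun i => (hγ₀pos i).ne') (γ - γ₀)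
    simp only [Pi.sub_apply, Finset.sum_sub_distrib, hsum, hγ.1.2, sub_self, mul_zero,
      zero_add] at hlin
    have hL : fderiv ℝ F γ₀ (γ - γ₀) < 0 := by
      linarith [hF.fderiv_apply_sub_le (mem_univ γ₀) (mem_univ γ) hFd]
    linarith [mul_pos_of_neg_of_neg hneg hL]
  · have hp_eq : ∀ i, p i = lam * γ₀ i := fun i => by simpa using hstat i
    have hlam : lam = 1 := by
      have := Finset.sum_congr rfl fun i (_ : i ∈ Finset.univ) => hp_eq i
      rwa [← Finset.mul_sum, hsum, hp.2, mul_one, eq_comm] at this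
    exact (hpΓ ((show p = γ₀ from funext fun i => by rw [hp_eq, hlam, one_mul]) ▸ hγ₀)).elim
  · exact hpos

theorem exists_contDiffOn_kkt_selection {p γ₀ : Fin d → ℝ} {lam mu : ℝ}
    {O : Set (Fin d → ℝ)} (hO : IsOpen O) (hγ₀O : γ₀ ∈ O) (hF : ContDiffOn ℝ (⊤ : ℕ∞) F O)
    (hγ₀ : ∀ i, 0 < γ₀ i) (hmu : 0 < mu) (hK : kktMap F (γ₀, lam, mu) = (p, 1, 0))
    (hbij : Function.Bijective (fderiv ℝ (kktMap F) (γ₀, lam, mu))) :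
    ∃ ζ > 0, ∃ g : (Fin d → ℝ) → Fin d → ℝ, ContDiffOn ℝ (⊤ : ℕ∞) g (ball p ζ) ∧
      ∀ q ∈ ball p ζ, (∀ i, 0 < g q i) ∧ DifferentiableAt ℝ F (g q) ∧
        ∃ lam mu, 0 < mu ∧ kktMap F (g q, lam, mu) = (q, 1, 0) := by
  obtain ⟨ψ, V, hV, hV₀, hψ, hψV⟩ := exists_contDiffOn_rightInverse_kktMap
    (U := {x | x.1 ∈ O ∩ {γ | ∀ i, 0 < γ i} ∧ 0 < x.2.2}) hO hF
    (((hO.inter isOpen_setOf_forall_pos).preimage continuous_fst).inter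
      (isOpen_lt continuous_const (continuous_snd.comp continuous_snd)))
    ⟨⟨hγ₀O, hγ₀⟩, hmu⟩ (fun _ hx => hx.1.1) hbij
  rw [hK] at hV₀
  have hι : ContDiff ℝ (⊤ : ℕ∞) fun q : Fin d → ℝ => (q, (1 : ℝ), (0 : ℝ)) := by fun_prop
  obtain ⟨ζ, hζ, hball⟩ := Metric.isOpen_iff.1 (hV.preimage hι.continuous) p hV₀
  refine ⟨ζ, hζ, fun q => (ψ (q, 1, 0)).1,
    contDiff_fst.comp_contDiffOn (hψ.comp hι.contDiffOn hball), fun q hq => ?_⟩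
  obtain ⟨⟨⟨hqO, hpos⟩, hmuq⟩, hKq⟩ := hψV _ (hball hq)
  exact ⟨hpos, (hF.contDiffAt (hO.mem_nhds hqO)).differentiableAt (by simp), _, _, hmuq, hKq⟩

end

theorem minimizer_map_smooth_general {d : ℕ} (p0 : Fin d → ℝ) (F : (Fin d → ℝ) → ℝ)
    (Γ : Set (Fin d → ℝ))
    (hp0 : p0 ∈ stdSimplex ℝ (Fin d)) (hp0pos : ∀ i, 0 < p0 i)
    -- (A1')
    (hFconv : ConvexOn ℝ Set.univ F)
    (hΓ : Γ = {γ ∈ stdSimplex ℝ (Fin d) | F γ ≤ 0})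
    (hp0notin : p0 ∉ Γ)
    -- (A2')
    (c0 : ℝ) (hc0 : 0 < c0) (hΓpos : ∀ γ ∈ Γ, ∀ i, c0 ≤ γ i)
    -- (A3')
    (γ' : Fin d → ℝ) (hγ'mem : γ' ∈ Γ)
    (hγ'min : IsMinOn (fun γ => ∑ i, p0 i * Real.log (p0 i / γ i)) Γ γ')
    (η : ℝ) (hη : 0 < η) (hFsmooth : ContDiffOn ℝ (⊤ : ℕ∞) F (Metric.ball γ' η))
    -- (A4')
    (hA4 : ∃ lam mu : ℝ,
      (∀ i, p0 i = lam * γ' i + mu * γ' i * fderiv ℝ F γ' (Pi.single i 1)) ∧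
      Function.Bijective (fderiv ℝ (kktMap F) (γ', lam, mu))) :
    ∃ ζ > 0, ∃ g : (Fin d → ℝ) → (Fin d → ℝ),
      ContDiffOn ℝ (⊤ : ℕ∞) g (Metric.ball p0 ζ) ∧
      (∀ q ∈ Metric.ball p0 ζ ∩ stdSimplex ℝ (Fin d), q ∉ Γ) ∧
      (∀ q ∈ Metric.ball p0 ζ ∩ stdSimplex ℝ (Fin d),
        g q ∈ Γ ∧ IsMinOn (fun γ => ∑ i, q i * Real.log (p0 i / γ i)) Γ (g q)) ∧
      (∀ q ∈ Metric.ball p0 ζ ∩ stdSimplex ℝ (Fin d), ∀ i : Fin d,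
        ∑ j, (q j / g q j) * fderiv ℝ (fun q' => g q' j) q (Pi.single i 1) = 0) := by
  obtain ⟨lam, mu, hstat, hbij⟩ := hA4
  subst hΓ
  have hΓpos' : ∀ γ ∈ {γ ∈ stdSimplex ℝ (Fin d) | F γ ≤ 0}, ∀ i, 0 < γ i :=
    fun γ hγ i => hc0.trans_le (hΓpos γ hγ i)
  have hγ'pos := hΓpos' γ' hγ'mem
  have hK : kktMap F (γ', lam, mu) = (p0, 1, 0) := kktMap_eq_iff.2 ⟨hstat, hγ'mem.1.2,
    hFconv.apply_eq_zero_of_isMinOn hp0 hp0pos hp0notin hγ'mem hγ'pos hγ'min⟩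
  have hmu : 0 < mu := multiplier_pos_of_kktMap_eq hFconv hp0 hp0pos hp0notin hγ'mem hγ'pos
    hγ'min hK ((hFsmooth.contDiffAt (ball_mem_nhds γ' hη)).differentiableAt (by simp))
    (exists_apply_neg_of_bijective_fderiv_kktMap isOpen_ball (mem_ball_self hη) hFsmooth
      hγ'pos hK hbij)
  obtain ⟨ζ₁, hζ₁, g, hg, hgK⟩ := exists_contDiffOn_kkt_selection isOpen_ball
    (mem_ball_self hη) hFsmooth hγ'pos hmu hK hbij
  obtain ⟨ζ₂, hζ₂, hΓc⟩ := Metric.isOpen_iff.1 ((isClosed_stdSimplex ℝ (Fin d)).inter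
    (isClosed_le hFconv.continuous_of_univ continuous_const)).isOpen_compl p0 hp0notin
  have hζ₁' : ball p0 (min ζ₁ ζ₂) ⊆ ball p0 ζ₁ := ball_subset_ball (min_le_left _ _)
  refine ⟨min ζ₁ ζ₂, lt_min hζ₁ hζ₂, g, hg.mono hζ₁',
    fun q hq => hΓc (ball_subset_ball (min_le_right _ _) hq.1), fun q hq => ?_, fun q hq i => ?_⟩
  · obtain ⟨hpos, hFd, _, _, hmu', hKq⟩ := hgK q (hζ₁' hq.1)
    exact isMinOn_of_kktMap_eq hFconv hKq hmu'.le hFd hp0pos hq.2.1 hpos hΓpos'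
  · obtain ⟨hpos, hFd, -⟩ := hgK q (hζ₁' hq.1)
    have hnhds : ball p0 ζ₁ ∈ 𝓝 q := isOpen_ball.mem_nhds (hζ₁' hq.1)
    have hKnhds : ∀ᶠ q' in 𝓝 q, ∃ lam mu, kktMap F (g q', lam, mu) = (q', 1, 0) := by
      filter_upwards [hnhds] with q' hq'
      obtain ⟨-, -, lam', mu', -, hKq'⟩ := hgK q' hq'
      exact ⟨lam', mu', hKq'⟩
    exact sum_div_mul_fderiv_eq_zero hKnhds ((hg.contDiffAt hnhds).differentiableAt (by simp))
      hFd (fun j => (hpos j).ne') _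

/-- **Smoothness of the minimizer map and the derivative identity (Lemma
`property`, part (i)).**  Under Conditions (A1')--(A4') (the last one expressed as
nonsingularity of the Jacobian of the first-order optimality (KKT) system at
`q = p0`), with `p0` a strictly positive pmf not in `Γ`, there exist `ζ > 0` and a
map `g`, smooth on the ball `B(p0, ζ)`, which assigns to each pmf `q ∈ B(p0, ζ)`
the unique minimizer of `γ ↦ Σ_i q i log (p0 i / γ i)` over `Γ`, and which
satisfies `Σ_j (q j / g_j(q)) ∂g_j(q)/∂q_i = 0` for every such `q` and every
`i`. -/
theorem minimizer_map_smooth {d : ℕ} (p0 : Fin d → ℝ) (F : (Fin d → ℝ) → ℝ)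
    (Γ : Set (Fin d → ℝ))
    (hp0 : p0 ∈ stdSimplex ℝ (Fin d)) (hp0pos : ∀ i, 0 < p0 i)
    -- (A1')
    (hFconv : ConvexOn ℝ Set.univ F) (hFcont : Continuous F)
    (hΓ : Γ = {γ ∈ stdSimplex ℝ (Fin d) | F γ ≤ 0})
    (hΓne : Γ.Nonempty) (hp0notin : p0 ∉ Γ)
    -- (A2')
    (c0 : ℝ) (hc0 : 0 < c0) (hΓpos : ∀ γ ∈ Γ, ∀ i, c0 ≤ γ i)
    -- (A3')
    (γ' : Fin d → ℝ) (hγ'mem : γ' ∈ Γ)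
    (hγ'min : IsMinOn (fun γ => ∑ i, p0 i * Real.log (p0 i / γ i)) Γ γ')
    (η : ℝ) (hη : 0 < η) (hFsmooth : ContDiffOn ℝ (⊤ : ℕ∞) F (Metric.ball γ' η))
    -- (A4')
    (hA4 : ∃ lam mu : ℝ,
      (∀ i, p0 i = lam * γ' i + mu * γ' i * fderiv ℝ F γ' (Pi.single i 1)) ∧
      Function.Bijective (fderiv ℝ (kktMap F) (γ', lam, mu))) :
    ∃ ζ > 0, ∃ g : (Fin d → ℝ) → (Fin d → ℝ),
      ContDiffOn ℝ (⊤ : ℕ∞) g (Metric.ball p0 ζ) ∧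
      (∀ q ∈ Metric.ball p0 ζ ∩ stdSimplex ℝ (Fin d), q ∉ Γ) ∧
      (∀ q ∈ Metric.ball p0 ζ ∩ stdSimplex ℝ (Fin d),
        g q ∈ Γ ∧ IsMinOn (fun γ => ∑ i, q i * Real.log (p0 i / γ i)) Γ (g q)) ∧
      (∀ q ∈ Metric.ball p0 ζ ∩ stdSimplex ℝ (Fin d), ∀ i : Fin d,
        ∑ j, (q j / g q j) * fderiv ℝ (fun q' => g q' j) q (Pi.single i 1) = 0) :=
  minimizer_map_smooth_general p0 F Γ hp0 hp0pos hFconv hΓ hp0notin c0 hc0 hΓpos γ' hγ'mem hγ'min η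
    hη hFsmooth hA4

end
end
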